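/- Let j ≥ 1, c > 0, τ ∈ ℝ. If h_j(c/2) - τ < 0 and α > 0 satisfies h_j(c/2 ± α) = τ, then for all real x, h_j(x) - τ = (x - c/2 + α)(x - c/2 - α)·Σ_{n=1}^{j} C(2j+1, 2n)·h_{j-n}(c/2)·(Σ_{ℓ=0}^{n-1} (x - c/2)^{2n-2-2ℓ}·α^{2ℓ}). -/
import Mathlib

open Finset

lemma sum_even_aux (f : ℕ → ℝ) (m : ℕ) (h : ∀ k, Odd k → f k = 0) :
    ∑ k ∈ Finset.range (2 * m), f k = ∑ n ∈ Finset.range m, f (2 * n) := by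
  induction m with
  | zero => simp
  | succ m ih =>
      have : 2 * (m + 1) = (2 * m + 1) + 1 := by ring
      rw [this, Finset.sum_range_succ, Finset.sum_range_succ, ih,
        h (2 * m + 1) ⟨m, by ring⟩, Finset.sum_range_succ]
      ring

lemma expand_aux (a t : ℝ) (j : ℕ) :
    (a + t) ^ (2 * j + 1) + (a - t) ^ (2 * j + 1)
      = ∑ n ∈ Finset.range (j + 1),
          ((2 * j + 1).choose (2 * n) : ℝ) * (2 * a ^ (2 * (j - n) + 1)) * t ^ (2 * n) := by
  have h1 : (a + t) ^ (2 * j + 1)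
      = ∑ k ∈ Finset.range (2 * j + 2), t ^ k * a ^ (2 * j + 1 - k) * ((2 * j + 1).choose k : ℝ) := by
    rw [add_comm a t]; exact add_pow t a (2 * j + 1)
  have h2 : (a - t) ^ (2 * j + 1)
      = ∑ k ∈ Finset.range (2 * j + 2), (-t) ^ k * a ^ (2 * j + 1 - k) * ((2 * j + 1).choose k : ℝ) := by
    have : a - t = -t + a := by ring
    rw [this]; exact add_pow (-t) a (2 * j + 1)
  rw [h1, h2, ← Finset.sum_add_distrib]
  have h3 : (2 * j + 2 : ℕ) = 2 * (j + 1) := by ring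
  rw [h3, sum_even_aux
    (fun k => t ^ k * a ^ (2 * j + 1 - k) * ((2 * j + 1).choose k : ℝ)
      + (-t) ^ k * a ^ (2 * j + 1 - k) * ((2 * j + 1).choose k : ℝ))
    (j + 1)
    (by
      intro k hk
      have := hk.neg_pow (a := t)
      simp only [this]
      ring)]
  refine Finset.sum_congr rfl fun n hn => ?_
  have hn' : n ≤ j := by simpa [Nat.lt_succ_iff] using hn
  have he : 2 * j + 1 - 2 * n = 2 * (j - n) + 1 := by omega
  have hev : (-t) ^ (2 * n) = t ^ (2 * n) := by
    rw [neg_pow, (even_two_mul n).neg_one_pow, one_mul]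
  rw [he, hev]
  ring

lemma diff_pow_aux (u α : ℝ) (n : ℕ) :
    u ^ (2 * n) - α ^ (2 * n)
      = (u + α) * (u - α) * ∑ ℓ ∈ Finset.range n, u ^ (2 * n - 2 - 2 * ℓ) * α ^ (2 * ℓ) := by
  have h := geom_sum₂_mul (u ^ 2) (α ^ 2) n
  have hs : ∑ ℓ ∈ Finset.range n, u ^ (2 * n - 2 - 2 * ℓ) * α ^ (2 * ℓ)
      = ∑ i ∈ Finset.range n, (u ^ 2) ^ i * (α ^ 2) ^ (n - 1 - i) := by
    rw [Finset.sum_nbij' (fun i => n - 1 - i) (fun i => n - 1 - i)]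
    · intro i hi; simp only [Finset.mem_range] at hi ⊢; omega
    · intro i hi; simp only [Finset.mem_range] at hi ⊢; omega
    · intro i hi; simp only [Finset.mem_range] at hi; omega
    · intro i hi; simp only [Finset.mem_range] at hi; omega
    · intro i hi
      simp only [Finset.mem_range] at hi
      rw [← pow_mul, ← pow_mul]
      congr 2 <;> omega
  rw [← pow_mul u 2 n, ← pow_mul α 2 n] at h
  rw [hs]
  have h2 : (u + α) * (u - α) = u ^ 2 - α ^ 2 := by ring
  rw [h2, ← h]
  exact (mul_comm _ _)

theorem h_j_root_factorization (j : ℕ) (hj : 1 ≤ j) (c : ℝ) (hc : 0 < c) (τ α : ℝ)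
    (hτ : (c / 2) ^ (2 * j + 1) + (c - c / 2) ^ (2 * j + 1) - τ < 0)
    (hα : 0 < α)
    (hroot₁ : (c / 2 + α) ^ (2 * j + 1) + (c - (c / 2 + α)) ^ (2 * j + 1) = τ)
    (hroot₂ : (c / 2 - α) ^ (2 * j + 1) + (c - (c / 2 - α)) ^ (2 * j + 1) = τ)
    (x : ℝ) :
    x ^ (2 * j + 1) + (c - x) ^ (2 * j + 1) - τ
      = (x - c / 2 + α) * (x - c / 2 - α)
          * ∑ n ∈ Finset.Icc 1 j,
              ((2 * j + 1).choose (2 * n) : ℝ)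
                * ((c / 2) ^ (2 * (j - n) + 1) + (c - c / 2) ^ (2 * (j - n) + 1))
                * (∑ ℓ ∈ Finset.range n, (x - c / 2) ^ (2 * n - 2 - 2 * ℓ) * α ^ (2 * ℓ)) := by
  set u := x - c / 2 with hu
  have hx : x = c / 2 + u := by rw [hu]; ring
  have hcx : c - x = c / 2 - u := by rw [hu]; ring
  have hca : c - (c / 2 + α) = c / 2 - α := by ring
  rw [hca] at hroot₁
  have hLHS : x ^ (2 * j + 1) + (c - x) ^ (2 * j + 1) - τ
      = ∑ n ∈ Finset.range (j + 1),
          ((2 * j + 1).choose (2 * n) : ℝ) * (2 * (c / 2) ^ (2 * (j - n) + 1))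
            * (u ^ (2 * n) - α ^ (2 * n)) := by
    rw [hcx, hx, expand_aux (c / 2) u j, ← hroot₁, expand_aux (c / 2) α j,
      ← Finset.sum_sub_distrib]
    exact Finset.sum_congr rfl fun n _ => by ring
  rw [hLHS]
  have hsplit : ∑ n ∈ Finset.range (j + 1),
      ((2 * j + 1).choose (2 * n) : ℝ) * (2 * (c / 2) ^ (2 * (j - n) + 1))
        * (u ^ (2 * n) - α ^ (2 * n))
      = ∑ n ∈ Finset.Icc 1 j,
          ((2 * j + 1).choose (2 * n) : ℝ) * (2 * (c / 2) ^ (2 * (j - n) + 1))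
            * (u ^ (2 * n) - α ^ (2 * n)) := by
    rw [Finset.sum_range_succ' (fun n =>
      ((2 * j + 1).choose (2 * n) : ℝ) * (2 * (c / 2) ^ (2 * (j - n) + 1))
        * (u ^ (2 * n) - α ^ (2 * n))) j]
    simp only [mul_zero, pow_zero, sub_self, add_zero]
    rw [← Finset.Ico_add_one_right_eq_Icc, Finset.sum_Ico_eq_sum_range]
    norm_num
    exact Finset.sum_congr rfl fun i _ => by rw [add_comm 1 i]
  rw [hsplit, Finset.mul_sum]
  refine Finset.sum_congr rfl fun n hn => ?_
  rw [diff_pow_aux u α n]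
  have hcc : c - c / 2 = c / 2 := by ring
  rw [hcc]
  have : (c / 2) ^ (2 * (j - n) + 1) + (c / 2) ^ (2 * (j - n) + 1)
      = 2 * (c / 2) ^ (2 * (j - n) + 1) := by ring
  rw [this]
  ring
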